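/- Let W : GL⁺(2) → ℝ be objective, isotropic and isochoric, and let f : [0,∞) → ℝ be the function defined by f(θ) = W(diag(exp(√θ), 1)), assumed twice continuously differentiable on [0,∞). If W is polyconvex, then f'(θ) ≥ 0 for all θ > 0. -/
import Mathlib


open Matrix Set

noncomputable section

/-- The space of real 2×2 matrices. -/
abbrev Mat2 : Type := Matrix (Fin 2) (Fin 2) ℝ

/-- The special orthogonal group SO(2): orthogonal 2×2 matrices with determinant 1. -/
def SO2 : Set Mat2 := {Q : Mat2 | Qᵀ * Q = 1 ∧ Q.det = 1}

/-- A function `W` (viewed on GL⁺(2) = {F | 0 < det F}) is polyconvex if there is a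
convex function `P : ℝ^{2×2} × ℝ → ℝ ∪ {+∞}` with `W F = P (F, det F)` on GL⁺(2). -/
def Polyconvex (W : Mat2 → ℝ) : Prop :=
  ∃ P : Mat2 × ℝ → EReal,
    (∀ x y : Mat2 × ℝ, ∀ a b : ℝ, 0 ≤ a → 0 ≤ b → a + b = 1 →
      P (a • x + b • y) ≤ (a : EReal) * P x + (b : EReal) * P y) ∧
    (∀ F : Mat2, 0 < F.det → (W F : EReal) = P (F, F.det))

/-- Rank-one convexity of `W` on GL⁺(2): convexity along rank-one line segments
lying in GL⁺(2). -/
def RankOneConvex (W : Mat2 → ℝ) : Prop :=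
  ∀ F : Mat2, 0 < F.det → ∀ ξ η : Fin 2 → ℝ, ∀ θ : ℝ, θ ∈ Set.Icc (0:ℝ) 1 →
    (∀ t ∈ Set.Icc (0:ℝ) 1, 0 < (F + t • vecMulVec ξ η).det) →
    W (F + (1 - θ) • vecMulVec ξ η) ≤ θ * W F + (1 - θ) * W (F + vecMulVec ξ η)

/-- Objectivity and isotropy: bi-SO(2)-invariance on GL⁺(2). -/
def ObjectiveIsotropic (W : Mat2 → ℝ) : Prop :=
  ∀ F : Mat2, 0 < F.det → ∀ Q₁ Q₂ : Mat2, Q₁ ∈ SO2 → Q₂ ∈ SO2 →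
    W (Q₁ * F * Q₂) = W F

/-- Isochoric: invariance under positive scaling on GL⁺(2). -/
def Isochoric (W : Mat2 → ℝ) : Prop :=
  ∀ F : Mat2, 0 < F.det → ∀ a : ℝ, 0 < a → W (a • F) = W F

/-- The 2×2 diagonal matrix diag(a, b). -/
def diag2 (a b : ℝ) : Mat2 := !![a, 0; 0, b]

/-- The squared Frobenius norm of a 2×2 matrix. -/
def frobSq (F : Mat2) : ℝ := ∑ i, ∑ j, (F i j) ^ 2

/-- The operator norm of `F` induced by the Euclidean norm on ℝ²:
the supremum of ‖F·x‖ over Euclidean-unit vectors x. -/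
def opNorm2 (F : Mat2) : ℝ :=
  sSup {r : ℝ | ∃ x : Fin 2 → ℝ, (x 0) ^ 2 + (x 1) ^ 2 = 1 ∧
    r = Real.sqrt ((F.mulVec x 0) ^ 2 + (F.mulVec x 1) ^ 2)}

section Aux

variable (W : Mat2 → ℝ)

lemma det_diag2 (a b : ℝ) : (diag2 a b).det = a * b := by simp [diag2]

lemma R_transpose : (!![0,-1;1,0] : Mat2)ᵀ = !![0,1;-1,0] := by
  ext i j; fin_cases i <;> fin_cases j <;> rfl

lemma R_mem_SO2 : (!![0,-1;1,0] : Mat2) ∈ SO2 := by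
  constructor
  · rw [R_transpose]; ext i j
    fin_cases i <;> fin_cases j <;>
      simp [Matrix.mul_apply, Fin.sum_univ_two, Matrix.one_apply]
  · simp

lemma Rt_mem_SO2 : (!![0,-1;1,0] : Mat2)ᵀ ∈ SO2 := by
  constructor
  · rw [Matrix.transpose_transpose, R_transpose]; ext i j
    fin_cases i <;> fin_cases j <;>
      simp [Matrix.mul_apply, Fin.sum_univ_two, Matrix.one_apply]
  · rw [R_transpose]; simp

lemma h_symm (hOI : ObjectiveIsotropic W) (hIso : Isochoric W)
    {a : ℝ} (ha : 0 < a) : W (diag2 a⁻¹ 1) = W (diag2 a 1) := by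
  have hsc : a • diag2 a⁻¹ 1 = diag2 1 a := by
    ext i j; fin_cases i <;> fin_cases j <;>
      simp [diag2, Matrix.smul_apply, mul_inv_cancel₀ ha.ne']
  have h1 : W (diag2 a⁻¹ 1) = W (diag2 1 a) := by
    rw [← hsc]
    exact (hIso _ (by rw [det_diag2]; positivity) a ha).symm
  have h2 : (!![0,-1;1,0] : Mat2) * diag2 1 a * (!![0,-1;1,0] : Mat2)ᵀ
      = diag2 a 1 := by
    rw [R_transpose]; ext i j
    fin_cases i <;> fin_cases j <;> simp [diag2, Matrix.mul_apply, Fin.sum_univ_two]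
  have h3 := hOI (diag2 1 a) (by rw [det_diag2]; linarith) _ _ R_mem_SO2 Rt_mem_SO2
  rw [h2] at h3
  rw [h1, ← h3]

lemma h_convex (hP : Polyconvex W) :
    ConvexOn ℝ (Set.Ioi (0:ℝ)) (fun a => W (diag2 a 1)) := by
  obtain ⟨P, hPc, hPW⟩ := hP
  refine ⟨convex_Ioi 0, fun x hx y hy a b ha hb hab => ?_⟩
  simp only [smul_eq_mul]
  have hx' : (0:ℝ) < x := hx
  have hy' : (0:ℝ) < y := hy
  have hxy : 0 < a * x + b * y := by
    rcases eq_or_lt_of_le ha with h | h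
    · have hb1 : b = 1 := by linarith
      rw [← h, hb1]; simpa using hy'
    · have : 0 ≤ b * y := mul_nonneg hb hy'.le
      nlinarith
  have key : a • ((diag2 x 1, x) : Mat2 × ℝ) + b • ((diag2 y 1, y) : Mat2 × ℝ)
      = (diag2 (a * x + b * y) 1, a * x + b * y) := by
    refine Prod.ext ?_ (by simp)
    ext i j; fin_cases i <;> fin_cases j <;>
      simp [diag2, Matrix.smul_apply, hab]
  have hineq := hPc (diag2 x 1, x) (diag2 y 1, y) a b ha hb hab
  rw [key] at hineq
  have e1 : (W (diag2 x 1) : EReal) = P (diag2 x 1, x) := by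
    have := hPW (diag2 x 1) (by rw [det_diag2]; simpa using hx')
    rwa [det_diag2, mul_one] at this
  have e2 : (W (diag2 y 1) : EReal) = P (diag2 y 1, y) := by
    have := hPW (diag2 y 1) (by rw [det_diag2]; simpa using hy')
    rwa [det_diag2, mul_one] at this
  have e3 : (W (diag2 (a * x + b * y) 1) : EReal) = P (diag2 (a * x + b * y) 1, a * x + b * y) := by
    have := hPW (diag2 (a * x + b * y) 1) (by rw [det_diag2]; simpa using hxy)
    rwa [det_diag2, mul_one] at this
  rw [← e1, ← e2, ← e3] at hineq
  have : ((W (diag2 (a * x + b * y) 1) : ℝ) : EReal)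
      ≤ ((a * W (diag2 x 1) + b * W (diag2 y 1) : ℝ) : EReal) := by
    rw [EReal.coe_add, EReal.coe_mul, EReal.coe_mul]
    exact hineq
  exact EReal.coe_le_coe_iff.mp this

lemma h_mono (hOI : ObjectiveIsotropic W) (hIso : Isochoric W) (hP : Polyconvex W)
    {x y : ℝ} (hx : 1 ≤ x) (hxy : x ≤ y) : W (diag2 x 1) ≤ W (diag2 y 1) := by
  have hy : 1 ≤ y := le_trans hx hxy
  have hy0 : (0:ℝ) < y := by linarith
  have hiy : (0:ℝ) < y⁻¹ := by positivity
  have hiy1 : y⁻¹ ≤ 1 := by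
    rw [inv_le_one_iff₀]; right; exact hy
  have hseg : x ∈ segment ℝ (y⁻¹) y := by
    rw [segment_eq_Icc (by linarith : y⁻¹ ≤ y)]
    exact ⟨by linarith, hxy⟩
  have := (h_convex W hP).le_on_segment (x := y⁻¹) (y := y) (z := x)
    (Set.mem_Ioi.mpr hiy) (Set.mem_Ioi.mpr hy0) hseg
  rwa [h_symm W hOI hIso hy0, max_self] at this

end Aux
/-- for objective, isotropic, isochoric, polyconvex `W` with
`f(θ) = W(diag(exp √θ, 1))` twice continuously differentiable on `[0,∞)`,
one has `f'(θ) ≥ 0` for all `θ > 0`. -/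
theorem polyconvex_implies_f_monotone (W : Mat2 → ℝ)
    (hOI : ObjectiveIsotropic W) (hIso : Isochoric W)
    (f : ℝ → ℝ) (hf : ∀ θ : ℝ, f θ = W (diag2 (Real.exp (Real.sqrt θ)) 1))
    (hC2 : ContDiffOn ℝ 2 f (Set.Ici (0:ℝ)))
    (hP : Polyconvex W) :
    ∀ θ : ℝ, 0 < θ → 0 ≤ deriv f θ := by
  intro θ hθ
  have fmono : ∀ a b : ℝ, 0 ≤ a → a ≤ b → f a ≤ f b := by
    intro a b ha hab
    rw [hf a, hf b]
    exact h_mono W hOI hIso hP (Real.one_le_exp (Real.sqrt_nonneg a))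
      (Real.exp_le_exp.mpr (Real.sqrt_le_sqrt hab))
  have hdiff : DifferentiableAt ℝ f θ := by
    have hmem : Set.Ici (0:ℝ) ∈ nhds θ := Ici_mem_nhds hθ
    exact ((hC2.differentiableOn (by norm_num)) θ (le_of_lt hθ)).differentiableAt hmem
  have hd : Filter.Tendsto (slope f θ) (nhdsWithin θ {θ}ᶜ) (nhds (deriv f θ)) :=
    hasDerivAt_iff_tendsto_slope.mp hdiff.hasDerivAt
  have hd' : Filter.Tendsto (slope f θ) (nhdsWithin θ (Set.Ioi θ)) (nhds (deriv f θ)) :=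
    hd.mono_left (nhdsWithin_mono θ fun y hy =>
      Set.mem_compl_singleton_iff.mpr (ne_of_gt hy))
  have hev : ∀ᶠ y in nhdsWithin θ (Set.Ioi θ), 0 ≤ slope f θ y := by
    filter_upwards [self_mem_nhdsWithin] with y hy
    have hylt : θ < y := hy
    rw [slope_def_field]
    exact div_nonneg (sub_nonneg.mpr (fmono θ y (le_of_lt hθ) (le_of_lt hylt)))
      (by linarith)
  exact ge_of_tendsto hd' hev
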